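/- The unique numerical semigroup of multiplicity 12 that is simultaneously a discretization of L and of F is H: if α_L, α_F ∈ [0,1] are such that S := ⌊12L⌋_{α_L} = ⌊12F⌋_{α_F} is a numerical semigroup, then S = H = {0, 12, 19, 24, 28, 31, 34, 36, 38, 40, 42, 43} ∪ {n ∈ ℕ : n ≥ 45}. -/
import Mathlib


/-- The sequence `λ_i = log₂ (i + 1)`. -/
noncomputable def Lseq : ℕ → ℝ := fun i => Real.logb 2 (i + 1)

/-- The golden ratio `φ = (1 + √5) / 2`. -/
noncomputable def phi : ℝ := (1 + Real.sqrt 5) / 2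

/-- Given `p ∈ (0,1)` (with `q = 1 - p`), the recursively defined division functions
`f_ℓ : {0, …, 2^ℓ - 1} → [0, 1)`:
`f₀ 0 = 0`, `f_{ℓ+1} n = p * f_ℓ n` if `n < 2^ℓ`, and `f_{ℓ+1} n = p + q * f_ℓ (n - 2^ℓ)`
otherwise. -/
noncomputable def fcut (p : ℝ) : ℕ → ℕ → ℝ
  | 0, _ => 0
  | ℓ + 1, n => if n < 2 ^ ℓ then p * fcut p ℓ n else p + (1 - p) * fcut p ℓ (n - 2 ^ ℓ)

/-- The golden fractal mold `F`:
`φ_i = ⌊log₂ (i+1)⌋ + f_{⌊log₂ (i+1)⌋} (i + 1 - 2 ^ ⌊log₂ (i+1)⌋)` with `p = φ - 1`.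
(Here `⌊log₂ (i+1)⌋ = Nat.log 2 (i+1)`.) -/
noncomputable def Fgold : ℕ → ℝ := fun i =>
  (Nat.log 2 (i + 1) : ℝ) +
    fcut (phi - 1) (Nat.log 2 (i + 1)) (i + 1 - 2 ^ Nat.log 2 (i + 1))

/-- Rounding by `α`: `⌊r⌋_α = ⌊r⌋` if `r - ⌊r⌋ < α`, and `⌈r⌉` otherwise. -/
noncomputable def floorAlpha (r α : ℝ) : ℤ := if r - ⌊r⌋ < α then ⌊r⌋ else ⌈r⌉

/-- The discretization `⌊mM⌋_α = {⌊m μ_i⌋_α : i ∈ ℕ}` of a mold `μ`, as a set of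
natural numbers. -/
noncomputable def discr (μ : ℕ → ℝ) (m : ℕ) (α : ℝ) : Set ℕ :=
  {n : ℕ | ∃ i : ℕ, (n : ℤ) = floorAlpha ((m : ℝ) * μ i) α}

/-- A numerical semigroup: a subset of `ℕ` containing `0`, with finite complement,
closed under addition. -/
def IsNumSgp (S : Set ℕ) : Prop :=
  0 ∈ S ∧ Sᶜ.Finite ∧ ∀ a ∈ S, ∀ b ∈ S, a + b ∈ S

/-- The well tempered harmonic semigroup
`H = {0, 12, 19, 24, 28, 31, 34, 36, 38, 40, 42, 43} ∪ {n : n ≥ 45}`. -/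
def Hsgp : Set ℕ :=
  ({0, 12, 19, 24, 28, 31, 34, 36, 38, 40, 42, 43} : Set ℕ) ∪ {n : ℕ | 45 ≤ n}

/- ## auxiliary machinery -/

lemma pg_sq : (phi - 1)^2 = 1 - (phi - 1) := by
  have h5 : Real.sqrt 5 ^ 2 = 5 := Real.sq_sqrt (by norm_num)
  unfold phi
  linear_combination (1/4) * h5

lemma pg_lb : (0.618 : ℝ) < phi - 1 := by
  have h : (2.236 : ℝ) < Real.sqrt 5 := by
    rw [show (2.236:ℝ) = Real.sqrt (2.236^2) from (Real.sqrt_sq (by norm_num)).symm]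
    exact Real.sqrt_lt_sqrt (by norm_num) (by norm_num)
  unfold phi; linarith

lemma pg_ub : phi - 1 < (0.6181 : ℝ) := by
  have h : Real.sqrt 5 < 2.2362 := by
    rw [show (2.2362:ℝ) = Real.sqrt (2.2362^2) from (Real.sqrt_sq (by norm_num)).symm]
    exact Real.sqrt_lt_sqrt (by norm_num) (by norm_num)
  unfold phi; linarith

lemma fcut_bounds : ∀ (ℓ n : ℕ), 0 ≤ fcut (phi - 1) ℓ n ∧ fcut (phi - 1) ℓ n < 1 := by
  have h1 := pg_lb; have h2 := pg_ub
  intro ℓ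
  induction ℓ with
  | zero => intro n; simp [fcut]
  | succ ℓ ih =>
    intro n
    by_cases h : n < 2 ^ ℓ
    · have := ih n
      simp only [fcut, if_pos h]
      constructor
      · nlinarith [this.1, this.2]
      · nlinarith [this.1, this.2]
    · have := ih (n - 2 ^ ℓ)
      simp only [fcut, if_neg h]
      constructor
      · nlinarith [this.1, this.2]
      · nlinarith [this.1, this.2]

lemma Fgold_range (i : ℕ) :
    12 * (Nat.log 2 (i+1) : ℝ) ≤ 12 * Fgold i ∧
      12 * Fgold i < 12 * (Nat.log 2 (i+1) : ℝ) + 12 := by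
  have h := fcut_bounds (Nat.log 2 (i+1)) (i + 1 - 2 ^ Nat.log 2 (i+1))
  unfold Fgold
  constructor <;> nlinarith [h.1, h.2]

/- ## the mold L: X k = 12 log₂ k -/

noncomputable def X (k : ℕ) : ℝ := 12 * Real.logb 2 k

lemma X_lt (k m : ℕ) (hk : 1 ≤ k) (h : k^12 < 2^m) : X k < m := by
  have h1 : Real.logb 2 ((k:ℝ)^12) < Real.logb 2 ((2:ℝ)^m) := by
    apply Real.logb_lt_logb (by norm_num)
    · have : (0:ℝ) < k := by exact_mod_cast hk
      positivity
    · exact_mod_cast h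
  simp only [Real.logb_pow] at h1
  simp [Real.logb_self_eq_one] at h1
  unfold X; linarith

lemma lt_X (k m : ℕ) (h : 2^m < k^12) : (m:ℝ) < X k := by
  have hk : (0:ℝ) < k := by
    rcases Nat.eq_zero_or_pos k with h0 | h0
    · subst h0; simp at h
    · exact_mod_cast h0
  have h1 : Real.logb 2 ((2:ℝ)^m) < Real.logb 2 ((k:ℝ)^12) := by
    apply Real.logb_lt_logb (by norm_num)
    · positivity
    · exact_mod_cast h
  simp only [Real.logb_pow] at h1
  simp [Real.logb_self_eq_one] at h1
  unfold X; linarith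

lemma X_mono {j k : ℕ} (hj : 1 ≤ j) (hk : j ≤ k) : X j ≤ X k := by
  have h0 : (0:ℝ) < j := by exact_mod_cast hj
  have hk' : (j:ℝ) ≤ (k:ℝ) := by exact_mod_cast hk
  have := Real.logb_le_logb_of_le (b := 2) (by norm_num) h0 hk'
  unfold X; linarith

lemma X_pow2 (m : ℕ) : X (2^m) = 12 * m := by
  unfold X
  push_cast
  rw [Real.logb_pow]
  simp [Real.logb_self_eq_one]

lemma X_double (k : ℕ) (hk : 1 ≤ k) : X (2*k) = X k + 12 := by
  unfold X
  have h0 : (0:ℝ) < k := by exact_mod_cast hk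
  push_cast
  rw [Real.logb_mul (by norm_num) (by positivity)]
  simp [Real.logb_self_eq_one]
  ring

lemma X_sub (a b m : ℕ) (ha : 1 ≤ a) (h : 2^m * a^12 < b^12) : X a + m < X b := by
  have ha' : (0:ℝ) < a := by exact_mod_cast ha
  have h1 : Real.logb 2 ((2:ℝ)^m * (a:ℝ)^12) < Real.logb 2 ((b:ℝ)^12) := by
    apply Real.logb_lt_logb (by norm_num)
    · positivity
    · exact_mod_cast h
  rw [Real.logb_mul (by positivity) (by positivity)] at h1
  simp only [Real.logb_pow] at h1
  simp [Real.logb_self_eq_one] at h1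
  unfold X; linarith

lemma X_step (j : ℕ) (hj : 17 ≤ j) : X (j+1) < X j + 1 := by
  have hnat : (j+1)^12 < 2 * j^12 := by
    have h1 : 17*(j+1) ≤ 18*j := by omega
    have h2 := Nat.pow_le_pow_left h1 12
    rw [mul_pow, mul_pow] at h2
    norm_num at h2
    have hB : 1 ≤ j^12 := Nat.one_le_pow _ _ (by omega)
    generalize hA : (j+1)^12 = A at *
    generalize hBB : j^12 = B at *
    omega
  have hj0 : (0:ℝ) < j := by
    have : 0 < j := by omega
    exact_mod_cast this
  have h1 : Real.logb 2 (((j:ℝ)+1)^12) < Real.logb 2 (2 * (j:ℝ)^12) := by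
    apply Real.logb_lt_logb (by norm_num)
    · positivity
    · exact_mod_cast hnat
  rw [Real.logb_mul (by norm_num) (by positivity)] at h1
  simp only [Real.logb_pow] at h1
  simp [Real.logb_self_eq_one] at h1
  unfold X
  push_cast
  linarith

/- ## floorAlpha lemmas -/

lemma fa_floor {r α : ℝ} {n : ℤ} (h1 : ⌊r⌋ = n) (h2 : r - n < α) : floorAlpha r α = n := by
  unfold floorAlpha
  rw [h1, if_pos h2]

lemma fa_ceil {r α : ℝ} {n : ℤ} (hfl : ⌊r⌋ = n - 1) (hcl : ⌈r⌉ = n)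
    (h2 : α ≤ r - ((n:ℝ) - 1)) : floorAlpha r α = n := by
  unfold floorAlpha
  rw [hfl, if_neg (by push_cast; linarith)]
  exact hcl

lemma fa_range {r α : ℝ} {n : ℤ} (h : floorAlpha r α = n) :
    (n:ℝ) - 1 < r ∧ r < (n:ℝ) + 1 := by
  unfold floorAlpha at h
  split at h
  · subst h
    have g1 := Int.floor_le r
    have g2 := Int.lt_floor_add_one r
    constructor <;> linarith
  · subst h
    have g1 := Int.ceil_lt_add_one r
    have g2 := Int.le_ceil r
    constructor <;> linarith

lemma fa_forces_floor {r α : ℝ} {n : ℤ} (h : floorAlpha r α = n) (hfl : ⌊r⌋ = n)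
    (hcl : ⌈r⌉ = n + 1) : r - n < α := by
  unfold floorAlpha at h
  split at h
  · rwa [hfl] at *
  · omega

lemma fa_forces_ceil {r α : ℝ} {n : ℤ} (h : floorAlpha r α = n) (hfl : ⌊r⌋ = n - 1) :
    α ≤ r - ((n:ℝ) - 1) := by
  unfold floorAlpha at h
  split at h
  · omega
  · next hc =>
    rw [hfl] at hc
    push_cast at hc
    linarith

lemma fa_mem {r α : ℝ} {n : ℤ} (hα : 0 < α) (hα1 : α ≤ 1) (h1 : (n:ℝ) - 1 + α ≤ r)
    (h2 : r < n + α) : floorAlpha r α = n := by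
  unfold floorAlpha
  split
  · next hb =>
    have hl : n - 1 ≤ ⌊r⌋ := Int.le_floor.mpr (by push_cast; linarith)
    have hu : ⌊r⌋ ≤ n := by
      by_contra hcon
      push_neg at hcon
      have hc2 : (n:ℝ) + 1 ≤ (⌊r⌋:ℝ) := by exact_mod_cast hcon
      have := Int.floor_le r
      linarith
    have : ⌊r⌋ = n - 1 ∨ ⌊r⌋ = n := by omega
    rcases this with h | h
    · exfalso
      rw [h] at hb
      push_cast at hb
      linarith
    · exact h
  · next hc =>
    rw [Int.ceil_eq_iff]
    constructor
    · linarith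
    · by_contra hr
      push_neg at hr
      have : (n:ℤ) ≤ ⌊r⌋ := Int.le_floor.mpr (le_of_lt hr)
      have : (n:ℝ) ≤ ⌊r⌋ := by exact_mod_cast this
      exact hc (by linarith)

/- ## membership reformulations -/

lemma mem_L {α : ℝ} {n : ℕ} :
    n ∈ discr Lseq 12 α ↔ ∃ k, 1 ≤ k ∧ (n:ℤ) = floorAlpha (X k) α := by
  unfold discr Lseq
  simp only [Set.mem_setOf_eq]
  have e : ∀ i : ℕ, ((12:ℕ):ℝ) * Real.logb 2 ((i:ℝ) + 1) = X (i+1) := by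
    intro i
    unfold X
    push_cast
    ring
  constructor
  · rintro ⟨i, hi⟩
    rw [e i] at hi
    exact ⟨i + 1, by omega, hi⟩
  · rintro ⟨k, hk1, hk⟩
    refine ⟨k - 1, ?_⟩
    rw [e (k-1), Nat.sub_add_cancel hk1]
    exact hk

lemma mem_F {α : ℝ} {n : ℕ} :
    n ∈ discr Fgold 12 α ↔ ∃ i, (n:ℤ) = floorAlpha (12 * Fgold i) α := by
  unfold discr
  simp only [Set.mem_setOf_eq]
  have e : ∀ i : ℕ, ((12:ℕ):ℝ) * Fgold i = 12 * Fgold i := by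
    intro i; norm_num
  constructor
  · rintro ⟨i, hi⟩
    rw [e i] at hi
    exact ⟨i, hi⟩
  · rintro ⟨i, hi⟩
    rw [← e i] at hi
    exact ⟨i, hi⟩

lemma log_window {i ℓ₀ : ℕ} (h1 : 12*(ℓ₀:ℝ) ≤ 12 * Fgold i)
    (h2 : 12 * Fgold i < 12*(ℓ₀:ℝ) + 12) : Nat.log 2 (i+1) = ℓ₀ := by
  obtain ⟨hr1, hr2⟩ := Fgold_range i
  set ℓ := Nat.log 2 (i+1) with hℓ
  have e1 : 12*(ℓ₀:ℝ) < 12*(ℓ:ℝ) + 12 := by linarith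
  have e2 : 12*(ℓ:ℝ) < 12*(ℓ₀:ℝ) + 12 := by linarith
  have n1 : ℓ₀ < ℓ + 1 := by exact_mod_cast (by linarith : (ℓ₀:ℝ) < (ℓ:ℝ) + 1)
  have n2 : ℓ < ℓ₀ + 1 := by exact_mod_cast (by linarith : (ℓ:ℝ) < (ℓ₀:ℝ) + 1)
  omega

/- END -/


lemma X_sub' (a b m : ℕ) (ha : 1 ≤ a) (hb : 1 ≤ b) (h : b^12 < 2^m * a^12) :
    X b < X a + m := by
  have ha' : (0:ℝ) < a := by exact_mod_cast ha
  have hb' : (0:ℝ) < b := by exact_mod_cast hb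
  have h1 : Real.logb 2 ((b:ℝ)^12) < Real.logb 2 ((2:ℝ)^m * (a:ℝ)^12) := by
    apply Real.logb_lt_logb (by norm_num)
    · positivity
    · exact_mod_cast h
  rw [Real.logb_mul (by positivity) (by positivity)] at h1
  simp only [Real.logb_pow] at h1
  simp [Real.logb_self_eq_one] at h1
  unfold X; linarith

lemma fa_range' {r α : ℝ} {n : ℕ} (h : (n:ℤ) = floorAlpha r α) :
    (n:ℝ) - 1 < r ∧ r < (n:ℝ) + 1 := by
  have h2 := fa_range h.symm
  push_cast at h2
  exact h2

lemma floor_eq' {r : ℝ} {n : ℤ} (h1 : (n:ℝ) ≤ r) (h2 : r < (n:ℝ) + 1) : ⌊r⌋ = n := by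
  rw [Int.floor_eq_iff]
  exact ⟨h1, by push_cast; linarith⟩

lemma ceil_eq' {r : ℝ} {n : ℤ} (h1 : (n:ℝ) - 1 < r) (h2 : r ≤ (n:ℝ)) : ⌈r⌉ = n := by
  rw [Int.ceil_eq_iff]
  exact ⟨by push_cast; linarith, h2⟩

lemma F_window {α : ℝ} {n : ℕ} (hn : n ∈ discr Fgold 12 α) (ℓ₀ : ℕ)
    (hlow : 12 * (ℓ₀:ℝ) ≤ (n:ℝ) - 1) (hhigh : (n:ℝ) + 1 ≤ 12 * (ℓ₀:ℝ) + 12) :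
    ∃ i, 2^ℓ₀ ≤ i + 1 ∧ i + 1 < 2^(ℓ₀+1) ∧ (n:ℤ) = floorAlpha (12 * Fgold i) α ∧
      (n:ℝ) - 1 < 12 * Fgold i ∧ 12 * Fgold i < (n:ℝ) + 1 := by
  obtain ⟨i, hi⟩ := mem_F.mp hn
  obtain ⟨hr1, hr2⟩ := fa_range' hi
  have hlog : Nat.log 2 (i+1) = ℓ₀ := log_window (by linarith) (by linarith)
  refine ⟨i, ?_, ?_, hi, hr1, hr2⟩
  · rw [← hlog]; exact Nat.pow_log_le_self 2 (by omega)
  · rw [← hlog]; exact Nat.lt_pow_succ_log_self (by norm_num) _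

lemma tail {α : ℝ} (hα0 : 0 < α) (hα1 : α ≤ 1) (h17 : X 17 - 49 < α) (n : ℕ) (hn : 50 ≤ n) :
    ∃ k, 1 ≤ k ∧ (n:ℤ) = floorAlpha (X k) α := by
  classical
  have hex : ∃ k, (n:ℝ) - 1 + α ≤ X k := by
    refine ⟨2^n, ?_⟩
    rw [X_pow2]
    have h50 : (50:ℝ) ≤ (n:ℝ) := by exact_mod_cast hn
    nlinarith
  have hspec : (n:ℝ) - 1 + α ≤ X (Nat.find hex) := Nat.find_spec hex
  set k0 := Nat.find hex with hk0def
  have h49X : (49:ℝ) < X 17 := by exact_mod_cast lt_X 17 49 (by norm_num)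
  have hT17 : X 17 < (n:ℝ) - 1 + α := by
    have h50 : (50:ℝ) ≤ (n:ℝ) := by exact_mod_cast hn
    linarith
  have hk0 : 18 ≤ k0 := by
    by_contra hcon
    push_neg at hcon
    have hle : X k0 ≤ X 17 := by
      rcases Nat.eq_zero_or_pos k0 with h0 | h0
      · have hx0 : X 0 = 0 := by unfold X; simp
        rw [h0, hx0]; linarith
      · exact X_mono h0 (by omega)
    linarith
  have hprev : ¬ ((n:ℝ) - 1 + α ≤ X (k0 - 1)) := Nat.find_min hex (by omega)
  push_neg at hprev
  have hstep : X k0 < X (k0 - 1) + 1 := by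
    have hs := X_step (k0 - 1) (by omega)
    rwa [Nat.sub_add_cancel (by omega : 1 ≤ k0)] at hs
  refine ⟨k0, by omega, ?_⟩
  exact (fa_mem hα0 hα1 (by push_cast; linarith) (by push_cast; linarith)).symm


lemma Fv3 : 12 * Fgold 2 = 12 + 12 * (phi - 1) := by
  have hlog : Nat.log 2 3 = 1 := by
    apply Nat.log_eq_of_pow_le_of_lt_pow <;> norm_num
  show 12 * ((Nat.log 2 (2 + 1) : ℝ) + fcut (phi - 1) (Nat.log 2 (2 + 1)) (2 + 1 - 2 ^ Nat.log 2 (2 + 1))) = _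
  norm_num [hlog, fcut]
  try linear_combination (0) * pg_sq

lemma Fv4 : 12 * Fgold 3 = 24 + 0 * (phi - 1) := by
  have hlog : Nat.log 2 4 = 2 := by
    apply Nat.log_eq_of_pow_le_of_lt_pow <;> norm_num
  show 12 * ((Nat.log 2 (3 + 1) : ℝ) + fcut (phi - 1) (Nat.log 2 (3 + 1)) (3 + 1 - 2 ^ Nat.log 2 (3 + 1))) = _
  norm_num [hlog, fcut]
  try linear_combination (0) * pg_sq

lemma Fv5 : 12 * Fgold 4 = 36 - 12 * (phi - 1) := by
  have hlog : Nat.log 2 5 = 2 := by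
    apply Nat.log_eq_of_pow_le_of_lt_pow <;> norm_num
  show 12 * ((Nat.log 2 (4 + 1) : ℝ) + fcut (phi - 1) (Nat.log 2 (4 + 1)) (4 + 1 - 2 ^ Nat.log 2 (4 + 1))) = _
  norm_num [hlog, fcut]
  try linear_combination ((12)) * pg_sq

lemma Fv6 : 12 * Fgold 5 = 24 + 12 * (phi - 1) := by
  have hlog : Nat.log 2 6 = 2 := by
    apply Nat.log_eq_of_pow_le_of_lt_pow <;> norm_num
  show 12 * ((Nat.log 2 (5 + 1) : ℝ) + fcut (phi - 1) (Nat.log 2 (5 + 1)) (5 + 1 - 2 ^ Nat.log 2 (5 + 1))) = _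
  norm_num [hlog, fcut]
  try linear_combination (0) * pg_sq

lemma Fv7 : 12 * Fgold 6 = 12 + 36 * (phi - 1) := by
  have hlog : Nat.log 2 7 = 2 := by
    apply Nat.log_eq_of_pow_le_of_lt_pow <;> norm_num
  show 12 * ((Nat.log 2 (6 + 1) : ℝ) + fcut (phi - 1) (Nat.log 2 (6 + 1)) (6 + 1 - 2 ^ Nat.log 2 (6 + 1))) = _
  norm_num [hlog, fcut]
  try linear_combination ((-12)) * pg_sq

lemma Fv8 : 12 * Fgold 7 = 36 + 0 * (phi - 1) := by
  have hlog : Nat.log 2 8 = 3 := by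
    apply Nat.log_eq_of_pow_le_of_lt_pow <;> norm_num
  show 12 * ((Nat.log 2 (7 + 1) : ℝ) + fcut (phi - 1) (Nat.log 2 (7 + 1)) (7 + 1 - 2 ^ Nat.log 2 (7 + 1))) = _
  norm_num [hlog, fcut]
  try linear_combination (0) * pg_sq

lemma Fv9 : 12 * Fgold 8 = 24 + 24 * (phi - 1) := by
  have hlog : Nat.log 2 9 = 3 := by
    apply Nat.log_eq_of_pow_le_of_lt_pow <;> norm_num
  show 12 * ((Nat.log 2 (8 + 1) : ℝ) + fcut (phi - 1) (Nat.log 2 (8 + 1)) (8 + 1 - 2 ^ Nat.log 2 (8 + 1))) = _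
  norm_num [hlog, fcut]
  try linear_combination ((-12) + (12) * (phi - 1)) * pg_sq

lemma Fv10 : 12 * Fgold 9 = 48 - 12 * (phi - 1) := by
  have hlog : Nat.log 2 10 = 3 := by
    apply Nat.log_eq_of_pow_le_of_lt_pow <;> norm_num
  show 12 * ((Nat.log 2 (9 + 1) : ℝ) + fcut (phi - 1) (Nat.log 2 (9 + 1)) (9 + 1 - 2 ^ Nat.log 2 (9 + 1))) = _
  norm_num [hlog, fcut]
  try linear_combination ((12)) * pg_sq

lemma Fv11 : 12 * Fgold 10 = 72 - 48 * (phi - 1) := by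
  have hlog : Nat.log 2 11 = 3 := by
    apply Nat.log_eq_of_pow_le_of_lt_pow <;> norm_num
  show 12 * ((Nat.log 2 (10 + 1) : ℝ) + fcut (phi - 1) (Nat.log 2 (10 + 1)) (10 + 1 - 2 ^ Nat.log 2 (10 + 1))) = _
  norm_num [hlog, fcut]
  try linear_combination ((36) + (-12) * (phi - 1)) * pg_sq

lemma Fv12 : 12 * Fgold 11 = 36 + 12 * (phi - 1) := by
  have hlog : Nat.log 2 12 = 3 := by
    apply Nat.log_eq_of_pow_le_of_lt_pow <;> norm_num
  show 12 * ((Nat.log 2 (11 + 1) : ℝ) + fcut (phi - 1) (Nat.log 2 (11 + 1)) (11 + 1 - 2 ^ Nat.log 2 (11 + 1))) = _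
  norm_num [hlog, fcut]
  try linear_combination (0) * pg_sq

lemma Fv13 : 12 * Fgold 12 = 60 - 24 * (phi - 1) := by
  have hlog : Nat.log 2 13 = 3 := by
    apply Nat.log_eq_of_pow_le_of_lt_pow <;> norm_num
  show 12 * ((Nat.log 2 (12 + 1) : ℝ) + fcut (phi - 1) (Nat.log 2 (12 + 1)) (12 + 1 - 2 ^ Nat.log 2 (12 + 1))) = _
  norm_num [hlog, fcut]
  try linear_combination ((24) + (-12) * (phi - 1)) * pg_sq

lemma Fv14 : 12 * Fgold 13 = 24 + 36 * (phi - 1) := by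
  have hlog : Nat.log 2 14 = 3 := by
    apply Nat.log_eq_of_pow_le_of_lt_pow <;> norm_num
  show 12 * ((Nat.log 2 (13 + 1) : ℝ) + fcut (phi - 1) (Nat.log 2 (13 + 1)) (13 + 1 - 2 ^ Nat.log 2 (13 + 1))) = _
  norm_num [hlog, fcut]
  try linear_combination ((-12)) * pg_sq

lemma Fv15 : 12 * Fgold 14 = -12 + 96 * (phi - 1) := by
  have hlog : Nat.log 2 15 = 3 := by
    apply Nat.log_eq_of_pow_le_of_lt_pow <;> norm_num
  show 12 * ((Nat.log 2 (14 + 1) : ℝ) + fcut (phi - 1) (Nat.log 2 (14 + 1)) (14 + 1 - 2 ^ Nat.log 2 (14 + 1))) = _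
  norm_num [hlog, fcut]
  try linear_combination ((-48) + (12) * (phi - 1)) * pg_sq

lemma Fv16 : 12 * Fgold 15 = 48 + 0 * (phi - 1) := by
  have hlog : Nat.log 2 16 = 4 := by
    apply Nat.log_eq_of_pow_le_of_lt_pow <;> norm_num
  show 12 * ((Nat.log 2 (15 + 1) : ℝ) + fcut (phi - 1) (Nat.log 2 (15 + 1)) (15 + 1 - 2 ^ Nat.log 2 (15 + 1))) = _
  norm_num [hlog, fcut]
  try linear_combination (0) * pg_sq

lemma Fv17 : 12 * Fgold 16 = 72 - 36 * (phi - 1) := by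
  have hlog : Nat.log 2 17 = 4 := by
    apply Nat.log_eq_of_pow_le_of_lt_pow <;> norm_num
  show 12 * ((Nat.log 2 (16 + 1) : ℝ) + fcut (phi - 1) (Nat.log 2 (16 + 1)) (16 + 1 - 2 ^ Nat.log 2 (16 + 1))) = _
  norm_num [hlog, fcut]
  try linear_combination ((24) + (-12) * (phi - 1) + (12) * (phi - 1)^2) * pg_sq

lemma Fv18 : 12 * Fgold 17 = 36 + 24 * (phi - 1) := by
  have hlog : Nat.log 2 18 = 4 := by
    apply Nat.log_eq_of_pow_le_of_lt_pow <;> norm_num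
  show 12 * ((Nat.log 2 (17 + 1) : ℝ) + fcut (phi - 1) (Nat.log 2 (17 + 1)) (17 + 1 - 2 ^ Nat.log 2 (17 + 1))) = _
  norm_num [hlog, fcut]
  try linear_combination ((-12) + (12) * (phi - 1)) * pg_sq

lemma Fv19 : 12 * Fgold 18 = 0 + 84 * (phi - 1) := by
  have hlog : Nat.log 2 19 = 4 := by
    apply Nat.log_eq_of_pow_le_of_lt_pow <;> norm_num
  show 12 * ((Nat.log 2 (18 + 1) : ℝ) + fcut (phi - 1) (Nat.log 2 (18 + 1)) (18 + 1 - 2 ^ Nat.log 2 (18 + 1))) = _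
  norm_num [hlog, fcut]
  try linear_combination ((-48) + (36) * (phi - 1) + (-12) * (phi - 1)^2) * pg_sq

lemma Fv20 : 12 * Fgold 19 = 60 - 12 * (phi - 1) := by
  have hlog : Nat.log 2 20 = 4 := by
    apply Nat.log_eq_of_pow_le_of_lt_pow <;> norm_num
  show 12 * ((Nat.log 2 (19 + 1) : ℝ) + fcut (phi - 1) (Nat.log 2 (19 + 1)) (19 + 1 - 2 ^ Nat.log 2 (19 + 1))) = _
  norm_num [hlog, fcut]
  try linear_combination ((12)) * pg_sq

lemma Fv21 : 12 * Fgold 20 = 24 + 48 * (phi - 1) := by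
  have hlog : Nat.log 2 21 = 4 := by
    apply Nat.log_eq_of_pow_le_of_lt_pow <;> norm_num
  show 12 * ((Nat.log 2 (20 + 1) : ℝ) + fcut (phi - 1) (Nat.log 2 (20 + 1)) (20 + 1 - 2 ^ Nat.log 2 (20 + 1))) = _
  norm_num [hlog, fcut]
  try linear_combination ((-24) + (24) * (phi - 1) + (-12) * (phi - 1)^2) * pg_sq

lemma Fv22 : 12 * Fgold 21 = 84 - 48 * (phi - 1) := by
  have hlog : Nat.log 2 22 = 4 := by
    apply Nat.log_eq_of_pow_le_of_lt_pow <;> norm_num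
  show 12 * ((Nat.log 2 (21 + 1) : ℝ) + fcut (phi - 1) (Nat.log 2 (21 + 1)) (21 + 1 - 2 ^ Nat.log 2 (21 + 1))) = _
  norm_num [hlog, fcut]
  try linear_combination ((36) + (-12) * (phi - 1)) * pg_sq

lemma Fv23 : 12 * Fgold 22 = 144 - 144 * (phi - 1) := by
  have hlog : Nat.log 2 23 = 4 := by
    apply Nat.log_eq_of_pow_le_of_lt_pow <;> norm_num
  show 12 * ((Nat.log 2 (22 + 1) : ℝ) + fcut (phi - 1) (Nat.log 2 (22 + 1)) (22 + 1 - 2 ^ Nat.log 2 (22 + 1))) = _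
  norm_num [hlog, fcut]
  try linear_combination ((96) + (-48) * (phi - 1) + (12) * (phi - 1)^2) * pg_sq

lemma Fv24 : 12 * Fgold 23 = 48 + 12 * (phi - 1) := by
  have hlog : Nat.log 2 24 = 4 := by
    apply Nat.log_eq_of_pow_le_of_lt_pow <;> norm_num
  show 12 * ((Nat.log 2 (23 + 1) : ℝ) + fcut (phi - 1) (Nat.log 2 (23 + 1)) (23 + 1 - 2 ^ Nat.log 2 (23 + 1))) = _
  norm_num [hlog, fcut]
  try linear_combination (0) * pg_sq

lemma Fv25 : 12 * Fgold 24 = 12 + 72 * (phi - 1) := by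
  have hlog : Nat.log 2 25 = 4 := by
    apply Nat.log_eq_of_pow_le_of_lt_pow <;> norm_num
  show 12 * ((Nat.log 2 (24 + 1) : ℝ) + fcut (phi - 1) (Nat.log 2 (24 + 1)) (24 + 1 - 2 ^ Nat.log 2 (24 + 1))) = _
  norm_num [hlog, fcut]
  try linear_combination ((-36) + (24) * (phi - 1) + (-12) * (phi - 1)^2) * pg_sq

lemma Fv26 : 12 * Fgold 25 = 72 - 24 * (phi - 1) := by
  have hlog : Nat.log 2 26 = 4 := by
    apply Nat.log_eq_of_pow_le_of_lt_pow <;> norm_num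
  show 12 * ((Nat.log 2 (25 + 1) : ℝ) + fcut (phi - 1) (Nat.log 2 (25 + 1)) (25 + 1 - 2 ^ Nat.log 2 (25 + 1))) = _
  norm_num [hlog, fcut]
  try linear_combination ((24) + (-12) * (phi - 1)) * pg_sq

lemma Fv27 : 12 * Fgold 26 = 132 - 120 * (phi - 1) := by
  have hlog : Nat.log 2 27 = 4 := by
    apply Nat.log_eq_of_pow_le_of_lt_pow <;> norm_num
  show 12 * ((Nat.log 2 (26 + 1) : ℝ) + fcut (phi - 1) (Nat.log 2 (26 + 1)) (26 + 1 - 2 ^ Nat.log 2 (26 + 1))) = _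
  norm_num [hlog, fcut]
  try linear_combination ((84) + (-48) * (phi - 1) + (12) * (phi - 1)^2) * pg_sq

lemma Fv28 : 12 * Fgold 27 = 36 + 36 * (phi - 1) := by
  have hlog : Nat.log 2 28 = 4 := by
    apply Nat.log_eq_of_pow_le_of_lt_pow <;> norm_num
  show 12 * ((Nat.log 2 (27 + 1) : ℝ) + fcut (phi - 1) (Nat.log 2 (27 + 1)) (27 + 1 - 2 ^ Nat.log 2 (27 + 1))) = _
  norm_num [hlog, fcut]
  try linear_combination ((-12)) * pg_sq

lemma Fv29 : 12 * Fgold 28 = 96 - 60 * (phi - 1) := by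
  have hlog : Nat.log 2 29 = 4 := by
    apply Nat.log_eq_of_pow_le_of_lt_pow <;> norm_num
  show 12 * ((Nat.log 2 (28 + 1) : ℝ) + fcut (phi - 1) (Nat.log 2 (28 + 1)) (28 + 1 - 2 ^ Nat.log 2 (28 + 1))) = _
  norm_num [hlog, fcut]
  try linear_combination ((48) + (-36) * (phi - 1) + (12) * (phi - 1)^2) * pg_sq

lemma Fv30 : 12 * Fgold 29 = 0 + 96 * (phi - 1) := by
  have hlog : Nat.log 2 30 = 4 := by
    apply Nat.log_eq_of_pow_le_of_lt_pow <;> norm_num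
  show 12 * ((Nat.log 2 (29 + 1) : ℝ) + fcut (phi - 1) (Nat.log 2 (29 + 1)) (29 + 1 - 2 ^ Nat.log 2 (29 + 1))) = _
  norm_num [hlog, fcut]
  try linear_combination ((-48) + (12) * (phi - 1)) * pg_sq

lemma Fv31 : 12 * Fgold 30 = -96 + 252 * (phi - 1) := by
  have hlog : Nat.log 2 31 = 4 := by
    apply Nat.log_eq_of_pow_le_of_lt_pow <;> norm_num
  show 12 * ((Nat.log 2 (30 + 1) : ℝ) + fcut (phi - 1) (Nat.log 2 (30 + 1)) (30 + 1 - 2 ^ Nat.log 2 (30 + 1))) = _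
  norm_num [hlog, fcut]
  try linear_combination ((-144) + (60) * (phi - 1) + (-12) * (phi - 1)^2) * pg_sq

set_option maxHeartbeats 3000000 in
/-- the unique numerical semigroup of multiplicity `12` that is simultaneously
a discretization of `L` and of `F` is `H`. -/
theorem unique_discretization_twelve (αL αF : ℝ)
    (hαL : αL ∈ Set.Icc (0 : ℝ) 1) (hαF : αF ∈ Set.Icc (0 : ℝ) 1)
    (heq : discr Lseq 12 αL = discr Fgold 12 αF)
    (hsgp : IsNumSgp (discr Lseq 12 αL)) :
    discr Lseq 12 αL = Hsgp := by
  obtain ⟨hαL0, hαL1⟩ := hαL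
  obtain ⟨hαF0, hαF1⟩ := hαF
  have hPl := pg_lb
  have hPu := pg_ub
  have hX1 : X 1 = 0 := by unfold X; simp
  have hX2 : X 2 = 12 := by simpa using X_pow2 1
  have hX4 : X 4 = 24 := by have h := X_pow2 2; norm_num at h; exact h
  have hX8 : X 8 = 36 := by have h := X_pow2 3; norm_num at h; exact h
  have hX16 : X 16 = 48 := by have h := X_pow2 4; norm_num at h; exact h
  have hX6 : X 6 = X 3 + 12 := by simpa using X_double 3 (by norm_num)
  have hX10 : X 10 = X 5 + 12 := by simpa using X_double 5 (by norm_num)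
  have hX12 : X 12 = X 6 + 12 := by simpa using X_double 6 (by norm_num)
  have hX14 : X 14 = X 7 + 12 := by simpa using X_double 7 (by norm_num)
  have hX3a : (19:ℝ) < X 3 := by exact_mod_cast lt_X 3 19 (by norm_num)
  have hX3b : X 3 < 20 := by exact_mod_cast X_lt 3 20 (by norm_num) (by norm_num)
  have hX5a : (27:ℝ) < X 5 := by exact_mod_cast lt_X 5 27 (by norm_num)
  have hX5b : X 5 < 28 := by exact_mod_cast X_lt 5 28 (by norm_num) (by norm_num)
  have hX7a : (33:ℝ) < X 7 := by exact_mod_cast lt_X 7 33 (by norm_num)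
  have hX7b : X 7 < 34 := by exact_mod_cast X_lt 7 34 (by norm_num) (by norm_num)
  have hX9a : (38:ℝ) < X 9 := by exact_mod_cast lt_X 9 38 (by norm_num)
  have hX9b : X 9 < 39 := by exact_mod_cast X_lt 9 39 (by norm_num) (by norm_num)
  have hX11a : (41:ℝ) < X 11 := by exact_mod_cast lt_X 11 41 (by norm_num)
  have hX11b : X 11 < 42 := by exact_mod_cast X_lt 11 42 (by norm_num) (by norm_num)
  have hX13a : (44:ℝ) < X 13 := by exact_mod_cast lt_X 13 44 (by norm_num)
  have hX13b : X 13 < 45 := by exact_mod_cast X_lt 13 45 (by norm_num) (by norm_num)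
  have hX15a : (46:ℝ) < X 15 := by exact_mod_cast lt_X 15 46 (by norm_num)
  have hX15b : X 15 < 47 := by exact_mod_cast X_lt 15 47 (by norm_num) (by norm_num)
  have hX17a : (49:ℝ) < X 17 := by exact_mod_cast lt_X 17 49 (by norm_num)
  have hX17b : X 17 < 50 := by exact_mod_cast X_lt 17 50 (by norm_num) (by norm_num)
  have hX19a : (50:ℝ) < X 19 := by exact_mod_cast lt_X 19 50 (by norm_num)
  have hX19b : X 19 < 51 := by exact_mod_cast X_lt 19 51 (by norm_num) (by norm_num)
  have hX18 : (50:ℝ) < X 18 := by exact_mod_cast lt_X 18 50 (by norm_num)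
  have hc2 : X 9 + 11 < X 17 := by exact_mod_cast X_sub 9 17 11 (by norm_num) (by norm_num)
  have hc3 : X 13 < X 5 + 17 := by exact_mod_cast X_sub' 5 13 17 (by norm_num) (by norm_num) (by norm_num)
  have hc4 : X 13 < X 7 + 11 := by exact_mod_cast X_sub' 7 13 11 (by norm_num) (by norm_num) (by norm_num)
  have hc5 : X 13 < X 11 + 3 := by exact_mod_cast X_sub' 11 13 3 (by norm_num) (by norm_num) (by norm_num)
  have hc6 : X 5 + 23 < X 19 := by exact_mod_cast X_sub 5 19 23 (by norm_num) (by norm_num)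
  have hc10 : X 13 + 2 < X 15 := by exact_mod_cast X_sub 13 15 2 (by norm_num) (by norm_num)
  -- D1 : αL ≤ X 5 - 27, via 27 ∉ discr F
  have hD1 : αL ≤ X 5 - 27 := by
    by_contra hcon
    push_neg at hcon
    have hfl : ⌊X 5⌋ = (27:ℤ) := floor_eq' (by push_cast; linarith) (by push_cast; linarith)
    have h27 : (27:ℕ) ∈ discr Lseq 12 αL :=
      mem_L.mpr ⟨5, by norm_num, by exact_mod_cast (fa_floor hfl (by push_cast; linarith)).symm⟩
    rw [heq] at h27
    have hmem := h27
    obtain ⟨i, hlo, hhi, hi, hr1, hr2⟩ := F_window hmem 2 (by push_cast; norm_num) (by push_cast; norm_num)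
    push_cast at hr1 hr2
    norm_num at hlo hhi
    have hilb : 3 ≤ i := by omega
    have hiub : i ≤ 6 := by omega
    interval_cases i
    · rw [Fv4] at hr1 hr2
      linarith
    · rw [Fv5] at hr1 hr2
      linarith
    · rw [Fv6] at hr1 hr2
      linarith
    · rw [Fv7] at hr1 hr2
      linarith

  -- 28 ∈ S
  have hfl5 : ⌊X 5⌋ = (28:ℤ) - 1 := floor_eq' (by push_cast; linarith) (by push_cast; linarith)
  have hcl5 : ⌈X 5⌉ = (28:ℤ) := ceil_eq' (by push_cast; linarith) (by push_cast; linarith)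
  have hv5 : floorAlpha (X 5) αL = 28 := fa_ceil hfl5 hcl5 (by push_cast; linarith)
  have h28S : (28:ℕ) ∈ discr Lseq 12 αL := mem_L.mpr ⟨5, by norm_num, by exact_mod_cast hv5.symm⟩
  -- F1 : 8 - 12p < αF
  have hF1 : 8 - 12*(phi-1) < αF := by
    have hmem : (28:ℕ) ∈ discr Fgold 12 αF := by rw [← heq]; exact h28S
    obtain ⟨i, hlo, hhi, hi, hr1, hr2⟩ := F_window hmem 2 (by push_cast; norm_num) (by push_cast; norm_num)
    push_cast at hr1 hr2
    norm_num at hlo hhi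
    have hilb : 3 ≤ i := by omega
    have hiub : i ≤ 6 := by omega
    interval_cases i
    · rw [Fv4] at hr1 hr2
      linarith
    · rw [Fv5] at hi hr1 hr2
      have hi' : (28:ℤ) = floorAlpha (36 - 12 * (phi - 1)) αF := by exact_mod_cast hi
      have hfl : ⌊(36 - 12 * (phi - 1) : ℝ)⌋ = (28:ℤ) := floor_eq' (by push_cast; linarith) (by push_cast; linarith)
      have hcl : ⌈(36 - 12 * (phi - 1) : ℝ)⌉ = (28:ℤ) + 1 := ceil_eq' (by push_cast; linarith) (by push_cast; linarith)
      have hforced := fa_forces_floor hi'.symm hfl hcl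
      push_cast at hforced
      linarith
    · rw [Fv6] at hr1 hr2
      linarith
    · rw [Fv7] at hr1 hr2
      linarith

  -- 19 ∈ F hence 19 ∈ S, hence hA1
  have h19S : (19:ℕ) ∈ discr Lseq 12 αL := by
    rw [heq]
    refine mem_F.mpr ⟨2, ?_⟩
    rw [Fv3]
    have hfl : ⌊(12:ℝ) + 12 * (phi - 1)⌋ = (19:ℤ) := floor_eq' (by push_cast; linarith) (by push_cast; linarith)
    exact_mod_cast (fa_floor hfl (by push_cast; linarith)).symm
  have hA1 : X 3 - 19 < αL := by
    have hmemL := h19S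
    obtain ⟨k, hk1, hkeq⟩ := mem_L.mp hmemL
    obtain ⟨hr1, hr2⟩ := fa_range' hkeq
    push_cast at hr1 hr2
    have hklb : 3 ≤ k := by
      by_contra hcon
      push_neg at hcon
      have hmono := X_mono hk1 (by omega : k ≤ 2)
      linarith
    have hkub : k ≤ 3 := by
      by_contra hcon
      push_neg at hcon
      have hmono := X_mono (by omega : 1 ≤ 4) (by omega : 4 ≤ k)
      linarith
    have hk : k = 3 := by omega
    subst hk
    have hi' : (19:ℤ) = floorAlpha (X 3) αL := by exact_mod_cast hkeq

    have hfl : ⌊X 3⌋ = (19:ℤ) := floor_eq' (by push_cast; linarith) (by push_cast; linarith)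
    have hcl : ⌈X 3⌉ = (19:ℤ) + 1 := ceil_eq' (by push_cast; linarith) (by push_cast; linarith)
    have hforced := fa_forces_floor hi'.symm hfl hcl
    push_cast at hforced
    linarith
  have hαLpos : 0 < αL := by linarith
  -- 38 ∈ S by semigroup property
  have h38S : (38:ℕ) ∈ discr Lseq 12 αL := by
    have hh := hsgp.2.2 19 h19S 19 h19S
    norm_num at hh
    exact hh
  -- F2 : 24p - 14 < αF
  have hF2 : 24*(phi-1) - 14 < αF := by
    have hmem : (38:ℕ) ∈ discr Fgold 12 αF := by rw [← heq]; exact h38S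
    obtain ⟨i, hlo, hhi, hi, hr1, hr2⟩ := F_window hmem 3 (by push_cast; norm_num) (by push_cast; norm_num)
    push_cast at hr1 hr2
    norm_num at hlo hhi
    have hilb : 7 ≤ i := by omega
    have hiub : i ≤ 14 := by omega
    interval_cases i
    · rw [Fv8] at hr1 hr2
      linarith
    · rw [Fv9] at hi hr1 hr2
      have hi' : (38:ℤ) = floorAlpha (24 + 24 * (phi - 1)) αF := by exact_mod_cast hi
      have hfl : ⌊(24 + 24 * (phi - 1) : ℝ)⌋ = (38:ℤ) := floor_eq' (by push_cast; linarith) (by push_cast; linarith)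
      have hcl : ⌈(24 + 24 * (phi - 1) : ℝ)⌉ = (38:ℤ) + 1 := ceil_eq' (by push_cast; linarith) (by push_cast; linarith)
      have hforced := fa_forces_floor hi'.symm hfl hcl
      push_cast at hforced
      linarith
    · rw [Fv10] at hr1 hr2
      linarith
    · rw [Fv11] at hr1 hr2
      linarith
    · rw [Fv12] at hr1 hr2
      linarith
    · rw [Fv13] at hr1 hr2
      linarith
    · rw [Fv14] at hr1 hr2
      linarith
    · rw [Fv15] at hr1 hr2
      linarith

  -- A3 : αL ≤ X 13 - 44, via 44 ∉ discr F
  have hA3 : αL ≤ X 13 - 44 := by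
    by_contra hcon
    push_neg at hcon
    have hfl : ⌊X 13⌋ = (44:ℤ) := floor_eq' (by push_cast; linarith) (by push_cast; linarith)
    have h44 : (44:ℕ) ∈ discr Lseq 12 αL :=
      mem_L.mpr ⟨13, by norm_num, by exact_mod_cast (fa_floor hfl (by push_cast; linarith)).symm⟩
    rw [heq] at h44
    have hmem := h44
    obtain ⟨i, hlo, hhi, hi, hr1, hr2⟩ := F_window hmem 3 (by push_cast; norm_num) (by push_cast; norm_num)
    push_cast at hr1 hr2
    norm_num at hlo hhi
    have hilb : 7 ≤ i := by omega
    have hiub : i ≤ 14 := by omega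
    interval_cases i
    · rw [Fv8] at hr1 hr2
      linarith
    · rw [Fv9] at hr1 hr2
      linarith
    · rw [Fv10] at hr1 hr2
      linarith
    · rw [Fv11] at hr1 hr2
      linarith
    · rw [Fv12] at hi hr1 hr2
      have hi' : (44:ℤ) = floorAlpha (36 + 12 * (phi - 1)) αF := by exact_mod_cast hi
      have hfl : ⌊(36 + 12 * (phi - 1) : ℝ)⌋ = (44:ℤ) - 1 := floor_eq' (by push_cast; linarith) (by push_cast; linarith)
      have hforced := fa_forces_ceil hi'.symm hfl
      push_cast at hforced
      linarith
    · rw [Fv13] at hr1 hr2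
      linarith
    · rw [Fv14] at hr1 hr2
      linarith
    · rw [Fv15] at hr1 hr2
      linarith

  -- A4 : αL ≤ X 7 - 33, via 34 ∈ S
  have hA4 : αL ≤ X 7 - 33 := by
    have hmemL : (34:ℕ) ∈ discr Lseq 12 αL := by
      rw [heq]
      refine mem_F.mpr ⟨6, ?_⟩
      rw [Fv7]
      have hfl : ⌊(12:ℝ) + 36 * (phi - 1)⌋ = (34:ℤ) := floor_eq' (by push_cast; linarith) (by push_cast; linarith)
      exact_mod_cast (fa_floor hfl (by push_cast; linarith)).symm
    obtain ⟨k, hk1, hkeq⟩ := mem_L.mp hmemL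
    obtain ⟨hr1, hr2⟩ := fa_range' hkeq
    push_cast at hr1 hr2
    have hklb : 7 ≤ k := by
      by_contra hcon
      push_neg at hcon
      have hmono := X_mono hk1 (by omega : k ≤ 6)
      linarith
    have hkub : k ≤ 7 := by
      by_contra hcon
      push_neg at hcon
      have hmono := X_mono (by omega : 1 ≤ 8) (by omega : 8 ≤ k)
      linarith
    have hk : k = 7 := by omega
    subst hk
    have hi' : (34:ℤ) = floorAlpha (X 7) αL := by exact_mod_cast hkeq

    have hfl7 : ⌊X 7⌋ = (34:ℤ) - 1 := floor_eq' (by push_cast; linarith) (by push_cast; linarith)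
    have hforced := fa_forces_ceil hi'.symm hfl7
    push_cast at hforced
    linarith
  -- A5 : αL ≤ X 11 - 41, via 41 ∉ discr F
  have hA5 : αL ≤ X 11 - 41 := by
    by_contra hcon
    push_neg at hcon
    have hfl : ⌊X 11⌋ = (41:ℤ) := floor_eq' (by push_cast; linarith) (by push_cast; linarith)
    have h41 : (41:ℕ) ∈ discr Lseq 12 αL :=
      mem_L.mpr ⟨11, by norm_num, by exact_mod_cast (fa_floor hfl (by push_cast; linarith)).symm⟩
    rw [heq] at h41
    have hmem := h41
    obtain ⟨i, hlo, hhi, hi, hr1, hr2⟩ := F_window hmem 3 (by push_cast; norm_num) (by push_cast; norm_num)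
    push_cast at hr1 hr2
    norm_num at hlo hhi
    have hilb : 7 ≤ i := by omega
    have hiub : i ≤ 14 := by omega
    interval_cases i
    · rw [Fv8] at hr1 hr2
      linarith
    · rw [Fv9] at hr1 hr2
      linarith
    · rw [Fv10] at hi hr1 hr2
      have hi' : (41:ℤ) = floorAlpha (48 - 12 * (phi - 1)) αF := by exact_mod_cast hi
      have hfl : ⌊(48 - 12 * (phi - 1) : ℝ)⌋ = (41:ℤ) - 1 := floor_eq' (by push_cast; linarith) (by push_cast; linarith)
      have hforced := fa_forces_ceil hi'.symm hfl
      push_cast at hforced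
      linarith
    · rw [Fv11] at hr1 hr2
      linarith
    · rw [Fv12] at hr1 hr2
      linarith
    · rw [Fv13] at hr1 hr2
      linarith
    · rw [Fv14] at hr1 hr2
      linarith
    · rw [Fv15] at hr1 hr2
      linarith

  -- 51 ∈ S, hence F3 : 84p - 51 < αF
  have hF3 : 84*(phi-1) - 51 < αF := by
    have h51S : (51:ℕ) ∈ discr Lseq 12 αL := by
      have hfl : ⌊X 19⌋ = (51:ℤ) - 1 := floor_eq' (by push_cast; linarith) (by push_cast; linarith)
      have hcl : ⌈X 19⌉ = (51:ℤ) := ceil_eq' (by push_cast; linarith) (by push_cast; linarith)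
      exact mem_L.mpr ⟨19, by norm_num, by exact_mod_cast (fa_ceil hfl hcl (by push_cast; linarith)).symm⟩
    have hmem : (51:ℕ) ∈ discr Fgold 12 αF := by rw [← heq]; exact h51S
    obtain ⟨i, hlo, hhi, hi, hr1, hr2⟩ := F_window hmem 4 (by push_cast; norm_num) (by push_cast; norm_num)
    push_cast at hr1 hr2
    norm_num at hlo hhi
    have hilb : 15 ≤ i := by omega
    have hiub : i ≤ 30 := by omega
    interval_cases i
    · rw [Fv16] at hr1 hr2
      linarith
    · rw [Fv17] at hr1 hr2
      linarith
    · rw [Fv18] at hi hr1 hr2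
      have hi' : (51:ℤ) = floorAlpha (36 + 24 * (phi - 1)) αF := by exact_mod_cast hi
      have hfl : ⌊(36 + 24 * (phi - 1) : ℝ)⌋ = (51:ℤ) - 1 := floor_eq' (by push_cast; linarith) (by push_cast; linarith)
      have hforced := fa_forces_ceil hi'.symm hfl
      push_cast at hforced
      linarith
    · rw [Fv19] at hi hr1 hr2
      have hi' : (51:ℤ) = floorAlpha (0 + 84 * (phi - 1)) αF := by exact_mod_cast hi
      have hfl : ⌊(0 + 84 * (phi - 1) : ℝ)⌋ = (51:ℤ) := floor_eq' (by push_cast; linarith) (by push_cast; linarith)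
      have hcl : ⌈(0 + 84 * (phi - 1) : ℝ)⌉ = (51:ℤ) + 1 := ceil_eq' (by push_cast; linarith) (by push_cast; linarith)
      have hforced := fa_forces_floor hi'.symm hfl hcl
      push_cast at hforced
      linarith
    · rw [Fv20] at hr1 hr2
      linarith
    · rw [Fv21] at hr1 hr2
      linarith
    · rw [Fv22] at hr1 hr2
      linarith
    · rw [Fv23] at hr1 hr2
      linarith
    · rw [Fv24] at hr1 hr2
      linarith
    · rw [Fv25] at hr1 hr2
      linarith
    · rw [Fv26] at hr1 hr2
      linarith
    · rw [Fv27] at hr1 hr2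
      linarith
    · rw [Fv28] at hr1 hr2
      linarith
    · rw [Fv29] at hr1 hr2
      linarith
    · rw [Fv30] at hr1 hr2
      linarith
    · rw [Fv31] at hr1 hr2
      linarith

  -- 49 ∈ F, hence 49 ∈ S, hence hA2
  have h49S : (49:ℕ) ∈ discr Lseq 12 αL := by
    rw [heq]
    refine mem_F.mpr ⟨16, ?_⟩
    rw [Fv17]
    have hfl : ⌊(72:ℝ) - 36 * (phi - 1)⌋ = (49:ℤ) := floor_eq' (by push_cast; linarith) (by push_cast; linarith)
    exact_mod_cast (fa_floor hfl (by push_cast; linarith)).symm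
  have hA2 : X 17 - 49 < αL := by
    have hmemL := h49S
    obtain ⟨k, hk1, hkeq⟩ := mem_L.mp hmemL
    obtain ⟨hr1, hr2⟩ := fa_range' hkeq
    push_cast at hr1 hr2
    have hklb : 17 ≤ k := by
      by_contra hcon
      push_neg at hcon
      have hmono := X_mono hk1 (by omega : k ≤ 16)
      linarith
    have hkub : k ≤ 17 := by
      by_contra hcon
      push_neg at hcon
      have hmono := X_mono (by omega : 1 ≤ 18) (by omega : 18 ≤ k)
      linarith
    have hk : k = 17 := by omega
    subst hk
    have hi' : (49:ℤ) = floorAlpha (X 17) αL := by exact_mod_cast hkeq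

    have hfl : ⌊X 17⌋ = (49:ℤ) := floor_eq' (by push_cast; linarith) (by push_cast; linarith)
    have hcl : ⌈X 17⌉ = (49:ℤ) + 1 := ceil_eq' (by push_cast; linarith) (by push_cast; linarith)
    have hforced := fa_forces_floor hi'.symm hfl hcl
    push_cast at hforced
    linarith
  -- the sixteen small values
  have hfl1 : ⌊X 1⌋ = (0:ℤ) := floor_eq' (by push_cast; linarith) (by push_cast; linarith)
  have hv1 : floorAlpha (X 1) αL = 0 := fa_floor hfl1 (by push_cast; linarith)
  have hfl2 : ⌊X 2⌋ = (12:ℤ) := floor_eq' (by push_cast; linarith) (by push_cast; linarith)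
  have hv2 : floorAlpha (X 2) αL = 12 := fa_floor hfl2 (by push_cast; linarith)
  have hfl3 : ⌊X 3⌋ = (19:ℤ) := floor_eq' (by push_cast; linarith) (by push_cast; linarith)
  have hv3 : floorAlpha (X 3) αL = 19 := fa_floor hfl3 (by push_cast; linarith)
  have hfl4 : ⌊X 4⌋ = (24:ℤ) := floor_eq' (by push_cast; linarith) (by push_cast; linarith)
  have hv4 : floorAlpha (X 4) αL = 24 := fa_floor hfl4 (by push_cast; linarith)
  have hfl6 : ⌊X 6⌋ = (31:ℤ) := floor_eq' (by push_cast; linarith) (by push_cast; linarith)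
  have hv6 : floorAlpha (X 6) αL = 31 := fa_floor hfl6 (by push_cast; linarith)
  have hfl7 : ⌊X 7⌋ = (34:ℤ) - 1 := floor_eq' (by push_cast; linarith) (by push_cast; linarith)
  have hcl7 : ⌈X 7⌉ = (34:ℤ) := ceil_eq' (by push_cast; linarith) (by push_cast; linarith)
  have hv7 : floorAlpha (X 7) αL = 34 := fa_ceil hfl7 hcl7 (by push_cast; linarith)
  have hfl8 : ⌊X 8⌋ = (36:ℤ) := floor_eq' (by push_cast; linarith) (by push_cast; linarith)
  have hv8 : floorAlpha (X 8) αL = 36 := fa_floor hfl8 (by push_cast; linarith)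
  have hfl9 : ⌊X 9⌋ = (38:ℤ) := floor_eq' (by push_cast; linarith) (by push_cast; linarith)
  have hv9 : floorAlpha (X 9) αL = 38 := fa_floor hfl9 (by push_cast; linarith)
  have hfl10 : ⌊X 10⌋ = (40:ℤ) - 1 := floor_eq' (by push_cast; linarith) (by push_cast; linarith)
  have hcl10 : ⌈X 10⌉ = (40:ℤ) := ceil_eq' (by push_cast; linarith) (by push_cast; linarith)
  have hv10 : floorAlpha (X 10) αL = 40 := fa_ceil hfl10 hcl10 (by push_cast; linarith)
  have hfl11 : ⌊X 11⌋ = (42:ℤ) - 1 := floor_eq' (by push_cast; linarith) (by push_cast; linarith)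
  have hcl11 : ⌈X 11⌉ = (42:ℤ) := ceil_eq' (by push_cast; linarith) (by push_cast; linarith)
  have hv11 : floorAlpha (X 11) αL = 42 := fa_ceil hfl11 hcl11 (by push_cast; linarith)
  have hfl12 : ⌊X 12⌋ = (43:ℤ) := floor_eq' (by push_cast; linarith) (by push_cast; linarith)
  have hv12 : floorAlpha (X 12) αL = 43 := fa_floor hfl12 (by push_cast; linarith)
  have hfl13 : ⌊X 13⌋ = (45:ℤ) - 1 := floor_eq' (by push_cast; linarith) (by push_cast; linarith)
  have hcl13 : ⌈X 13⌉ = (45:ℤ) := ceil_eq' (by push_cast; linarith) (by push_cast; linarith)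
  have hv13 : floorAlpha (X 13) αL = 45 := fa_ceil hfl13 hcl13 (by push_cast; linarith)
  have hfl14 : ⌊X 14⌋ = (46:ℤ) - 1 := floor_eq' (by push_cast; linarith) (by push_cast; linarith)
  have hcl14 : ⌈X 14⌉ = (46:ℤ) := ceil_eq' (by push_cast; linarith) (by push_cast; linarith)
  have hv14 : floorAlpha (X 14) αL = 46 := fa_ceil hfl14 hcl14 (by push_cast; linarith)
  have hfl15 : ⌊X 15⌋ = (47:ℤ) - 1 := floor_eq' (by push_cast; linarith) (by push_cast; linarith)
  have hcl15 : ⌈X 15⌉ = (47:ℤ) := ceil_eq' (by push_cast; linarith) (by push_cast; linarith)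
  have hv15 : floorAlpha (X 15) αL = 47 := fa_ceil hfl15 hcl15 (by push_cast; linarith)
  have hfl16 : ⌊X 16⌋ = (48:ℤ) := floor_eq' (by push_cast; linarith) (by push_cast; linarith)
  have hv16 : floorAlpha (X 16) αL = 48 := fa_floor hfl16 (by push_cast; linarith)
  have hfl17 : ⌊X 17⌋ = (49:ℤ) := floor_eq' (by push_cast; linarith) (by push_cast; linarith)
  have hv17 : floorAlpha (X 17) αL = 49 := fa_floor hfl17 (by push_cast; linarith)
  -- conclusion
  ext n
  constructor
  · intro hn
    by_contra hH
    obtain ⟨k, hk1, hkeq⟩ := mem_L.mp hn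
    obtain ⟨hr1, hr2⟩ := fa_range' hkeq
    rcases le_or_gt k 16 with hk16 | hk17
    · interval_cases k
      · rw [hv1] at hkeq
        have hn' : n = 0 := by exact_mod_cast hkeq
        subst hn'
        exact hH (by simp [Hsgp])
      · rw [hv2] at hkeq
        have hn' : n = 12 := by exact_mod_cast hkeq
        subst hn'
        exact hH (by simp [Hsgp])
      · rw [hv3] at hkeq
        have hn' : n = 19 := by exact_mod_cast hkeq
        subst hn'
        exact hH (by simp [Hsgp])
      · rw [hv4] at hkeq
        have hn' : n = 24 := by exact_mod_cast hkeq
        subst hn'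
        exact hH (by simp [Hsgp])
      · rw [hv5] at hkeq
        have hn' : n = 28 := by exact_mod_cast hkeq
        subst hn'
        exact hH (by simp [Hsgp])
      · rw [hv6] at hkeq
        have hn' : n = 31 := by exact_mod_cast hkeq
        subst hn'
        exact hH (by simp [Hsgp])
      · rw [hv7] at hkeq
        have hn' : n = 34 := by exact_mod_cast hkeq
        subst hn'
        exact hH (by simp [Hsgp])
      · rw [hv8] at hkeq
        have hn' : n = 36 := by exact_mod_cast hkeq
        subst hn'
        exact hH (by simp [Hsgp])
      · rw [hv9] at hkeq
        have hn' : n = 38 := by exact_mod_cast hkeq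
        subst hn'
        exact hH (by simp [Hsgp])
      · rw [hv10] at hkeq
        have hn' : n = 40 := by exact_mod_cast hkeq
        subst hn'
        exact hH (by simp [Hsgp])
      · rw [hv11] at hkeq
        have hn' : n = 42 := by exact_mod_cast hkeq
        subst hn'
        exact hH (by simp [Hsgp])
      · rw [hv12] at hkeq
        have hn' : n = 43 := by exact_mod_cast hkeq
        subst hn'
        exact hH (by simp [Hsgp])
      · rw [hv13] at hkeq
        have hn' : n = 45 := by exact_mod_cast hkeq
        subst hn'
        exact hH (by simp [Hsgp])
      · rw [hv14] at hkeq
        have hn' : n = 46 := by exact_mod_cast hkeq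
        subst hn'
        exact hH (by simp [Hsgp])
      · rw [hv15] at hkeq
        have hn' : n = 47 := by exact_mod_cast hkeq
        subst hn'
        exact hH (by simp [Hsgp])
      · rw [hv16] at hkeq
        have hn' : n = 48 := by exact_mod_cast hkeq
        subst hn'
        exact hH (by simp [Hsgp])
    · have hmono := X_mono (by norm_num : 1 ≤ 17) (by omega : 17 ≤ k)
      have hn49 : (48:ℝ) < (n:ℝ) := by linarith
      have : 48 < n := by exact_mod_cast hn49
      exact hH (by simp [Hsgp]; omega)
  · intro hn
    simp only [Hsgp, Set.mem_union, Set.mem_insert_iff, Set.mem_singleton_iff,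
      Set.mem_setOf_eq] at hn
    rcases hn with (h|h|h|h|h|h|h|h|h|h|h|h) | h
    · subst h
      exact mem_L.mpr ⟨1, by norm_num, by exact_mod_cast hv1.symm⟩
    · subst h
      exact mem_L.mpr ⟨2, by norm_num, by exact_mod_cast hv2.symm⟩
    · subst h
      exact mem_L.mpr ⟨3, by norm_num, by exact_mod_cast hv3.symm⟩
    · subst h
      exact mem_L.mpr ⟨4, by norm_num, by exact_mod_cast hv4.symm⟩
    · subst h
      exact mem_L.mpr ⟨5, by norm_num, by exact_mod_cast hv5.symm⟩
    · subst h
      exact mem_L.mpr ⟨6, by norm_num, by exact_mod_cast hv6.symm⟩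
    · subst h
      exact mem_L.mpr ⟨7, by norm_num, by exact_mod_cast hv7.symm⟩
    · subst h
      exact mem_L.mpr ⟨8, by norm_num, by exact_mod_cast hv8.symm⟩
    · subst h
      exact mem_L.mpr ⟨9, by norm_num, by exact_mod_cast hv9.symm⟩
    · subst h
      exact mem_L.mpr ⟨10, by norm_num, by exact_mod_cast hv10.symm⟩
    · subst h
      exact mem_L.mpr ⟨11, by norm_num, by exact_mod_cast hv11.symm⟩
    · subst h
      exact mem_L.mpr ⟨12, by norm_num, by exact_mod_cast hv12.symm⟩
    rcases lt_or_ge n 50 with h50 | h50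
    · interval_cases n
      · exact mem_L.mpr ⟨13, by norm_num, by exact_mod_cast hv13.symm⟩
      · exact mem_L.mpr ⟨14, by norm_num, by exact_mod_cast hv14.symm⟩
      · exact mem_L.mpr ⟨15, by norm_num, by exact_mod_cast hv15.symm⟩
      · exact mem_L.mpr ⟨16, by norm_num, by exact_mod_cast hv16.symm⟩
      · exact mem_L.mpr ⟨17, by norm_num, by exact_mod_cast hv17.symm⟩
    · exact mem_L.mpr (tail hαLpos hαL1 hA2 n h50)
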